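/- arXiv:math/0607595 — 3 statements merged into one kernel-verified Lean document; each statement's English description precedes it below -/
import Mathlib

section
/- Let V be an 𝔽₂-vector space and i, j, k, l natural numbers with k + l ≤ j. Then θ_{i+k, j−k, l} ∘ θ_{i,j,k} = ((k+l)! / (k! l!) mod 2) · θ_{i,j,k+l} as linear maps Λ^i(V) ⊗ Λ^j(V) → Λ^{i+k+l}(V) ⊗ Λ^{j−k−l}(V); i.e. the composite equals the binomial coefficient C(k+l, k) reduced mod 2 times θ_{i,j,k+l}. -/
open scoped TensorProduct

noncomputable section

abbrev F2 := ZMod 2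

variable {V : Type*} [AddCommGroup V] [Module F2 V]

/-- The wedge `x₁ ∧ ⋯ ∧ xₙ` of a family of vectors, as an element of the `n`-th exterior
power `⋀[𝔽₂]^n V`. -/
def wedge (n : ℕ) (x : Fin n → V) : ⋀[F2]^n V :=
  ⟨ExteriorAlgebra.ιMulti F2 n x,
    ExteriorAlgebra.ιMulti_range F2 n (Set.mem_range_self x)⟩

/-- `IsTheta i j t θ` says that
`θ : Λ^i(V) ⊗ Λ^j(V) → Λ^a(V) ⊗ Λ^b(V)` (where `a = i + t` and `b = j − t`) is the map
`θ_{i,j,t}` determined on decomposables by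
`x ⊗ (b₁ ∧ ⋯ ∧ b_j) ↦ Σ_{|S| = t} (x ∧ b_S) ⊗ b_{Sᶜ}`,
the sum being over the `t`-element subsets `S` of `{1, …, j}` and `b_S` denoting the wedge
of the `b_s`, `s ∈ S`, in increasing order. -/
def IsTheta (i j t : ℕ) {a b : ℕ} (ha : i + t = a) (hb : j - t = b)
    (θ : (⋀[F2]^i V) ⊗[F2] (⋀[F2]^j V) →ₗ[F2] (⋀[F2]^a V) ⊗[F2] (⋀[F2]^b V)) : Prop :=
  ∀ (x : Fin i → V) (y : Fin j → V),
    θ (wedge i x ⊗ₜ wedge j y) =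
      ∑ S ∈ (Finset.powersetCard t (Finset.univ : Finset (Fin j))).attach,
        wedge a (Fin.append x
            (y ∘ (S.1.orderEmbOfFin (Finset.mem_powersetCard.mp S.2).2)) ∘ Fin.cast ha.symm)
          ⊗ₜ
        wedge b ((y ∘ ((S.1)ᶜ.orderEmbOfFin
            (by simp [Finset.card_compl, (Finset.mem_powersetCard.mp S.2).2]))) ∘
          Fin.cast hb.symm)

/-- `IsDTheta i j t Dθ` says that
`Dθ : Λ^a(V) ⊗ Λ^b(V) → Λ^i(V) ⊗ Λ^j(V)` (where `a = i + t` and `j = b + t`) is the dual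
map `Dθ_{i,j,t}` determined on decomposables by
`(a₁ ∧ ⋯ ∧ a_{i+t}) ⊗ y ↦ Σ_{|S| = t} a_{Sᶜ} ⊗ (y ∧ a_S)`. -/
def IsDTheta (i j t : ℕ) {a b : ℕ} (ha : i + t = a) (hb : b + t = j)
    (Dθ : (⋀[F2]^a V) ⊗[F2] (⋀[F2]^b V) →ₗ[F2] (⋀[F2]^i V) ⊗[F2] (⋀[F2]^j V)) : Prop :=
  ∀ (x : Fin a → V) (y : Fin b → V),
    Dθ (wedge a x ⊗ₜ wedge b y) =
      ∑ S ∈ (Finset.powersetCard t (Finset.univ : Finset (Fin a))).attach,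
        wedge i ((x ∘ ((S.1)ᶜ.orderEmbOfFin
            (by simp [Finset.card_compl, (Finset.mem_powersetCard.mp S.2).2]))) ∘
          Fin.cast (by omega : i = a - t))
          ⊗ₜ
        wedge j (Fin.append y
            (x ∘ (S.1.orderEmbOfFin (Finset.mem_powersetCard.mp S.2).2)) ∘ Fin.cast hb.symm)

/-!
On `x ⊗ (b₁ ∧ ⋯ ∧ b_j)` the composite `θ_{i+k,j−k,l} ∘ θ_{i,j,k}` is the sum, over `k`-sets `S`
and `l`-sets `W ⊆ Sᶜ`, of `(x ∧ b_S ∧ b_W) ⊗ b_{(S ∪ W)ᶜ}`. Over `𝔽₂` a wedge does not change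
when its factors are permuted, so this term is the `(S ∪ W)`-term of `θ_{i,j,k+l}`, and every
`(k+l)`-set `U` arises from exactly `C(k+l, k)` pairs `(S, U \ S)`.
-/

open Finset

lemma Fin.comp_append {α β : Type*} {m n : ℕ} (f : α → β) (a : Fin m → α) (b : Fin n → α) :
    f ∘ Fin.append a b = Fin.append (f ∘ a) (f ∘ b) := by
  funext v
  refine Fin.addCases (fun p => ?_) (fun p => ?_) v <;> simp

lemma Fin.range_append {α : Type*} {m n : ℕ} (a : Fin m → α) (b : Fin n → α) :
    Set.range (Fin.append a b) = Set.range a ∪ Set.range b := by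
  rw [← finSumFinEquiv.surjective.range_comp, ← Set.Sum.elim_range]
  congr 1
  ext (v | v) <;> simp

lemma Fin.exists_append_comp_perm {α : Type*} {m n : ℕ} (a : Fin m → α) (b : Fin n → α)
    (π : Equiv.Perm (Fin n)) :
    ∃ σ : Equiv.Perm (Fin (m + n)), Fin.append a (b ∘ π) = Fin.append a b ∘ σ := by
  refine ⟨finSumFinEquiv.symm.trans
    ((Equiv.sumCongr (Equiv.refl (Fin m)) π).trans finSumFinEquiv), ?_⟩
  funext v
  refine Fin.addCases (fun p => ?_) (fun p => ?_) v <;> simp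

lemma exists_perm_eq_comp_of_range_eq {α ι : Type*} {f g : ι → α}
    (hf : Function.Injective f) (hg : Function.Injective g) (hfg : Set.range f = Set.range g) :
    ∃ π : Equiv.Perm ι, f = g ∘ π := by
  refine ⟨(Equiv.ofInjective f hf).trans
    ((Equiv.setCongr hfg).trans (Equiv.ofInjective g hg).symm), funext fun v => ?_⟩
  simp [Equiv.apply_ofInjective_symm hg]

lemma Finset.sum_powersetCard_map_orderEmbOfFin {α M : Type*} [LinearOrder α] [AddCommMonoid M]
    (s : Finset α) {m : ℕ} (h : s.card = m) (l : ℕ) (g : Finset α → M) :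
    ∑ T ∈ powersetCard l (univ : Finset (Fin m)), g (T.map (s.orderEmbOfFin h).toEmbedding) =
      ∑ W ∈ powersetCard l s, g W := by
  conv_rhs => rw [← map_orderEmbOfFin_univ s h, powersetCard_map, sum_map]
  rfl

lemma Finset.sum_powersetCard_sum_powersetCard_sdiff_union {α M : Type*} [DecidableEq α]
    [AddCommMonoid M] (s : Finset α) (k l : ℕ) (f : Finset α → M) :
    ∑ S ∈ powersetCard k s, ∑ W ∈ powersetCard l (s \ S), f (S ∪ W) =
      (k + l).choose k • ∑ U ∈ powersetCard (k + l) s, f U := by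
  have inner : ∀ S ∈ powersetCard k s, ∑ W ∈ powersetCard l (s \ S), f (S ∪ W) =
      ∑ U ∈ (powersetCard (k + l) s).filter (S ⊆ ·), f U := by
    intro S hS
    rw [mem_powersetCard] at hS
    have disj : ∀ {W}, W ∈ powersetCard l (s \ S) → Disjoint S W := fun hW =>
      disjoint_of_subset_right (mem_powersetCard.1 hW).1 disjoint_sdiff
    refine sum_nbij' (S ∪ ·) (· \ S) (fun W hW => ?_) (fun U hU => ?_)
      (fun W hW => union_sdiff_cancel_left (disj hW)) (fun U hU => ?_) fun _ _ => rfl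
    · obtain ⟨hWs, hWl⟩ := mem_powersetCard.1 hW
      refine mem_filter.2 ⟨mem_powersetCard.2 ⟨union_subset hS.1 (hWs.trans sdiff_subset), ?_⟩,
        subset_union_left⟩
      rw [card_union_of_disjoint (disj hW), hS.2, hWl]
    · obtain ⟨⟨hUs, hUc⟩, hSU⟩ := mem_filter.1 (mem_coe.1 hU) |>.imp_left mem_powersetCard.1
      refine mem_powersetCard.2 ⟨sdiff_subset_sdiff hUs le_rfl, ?_⟩
      rw [card_sdiff_of_subset hSU, hUc, hS.2, Nat.add_sub_cancel_left]
    · exact union_sdiff_of_subset (mem_filter.1 (mem_coe.1 hU)).2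
  rw [sum_congr rfl inner, sum_comm' (t' := powersetCard (k + l) s)
    (s' := fun U => powersetCard k U), smul_sum]
  · refine sum_congr rfl fun U hU => ?_
    rw [sum_const, card_powersetCard, (mem_powersetCard.1 hU).2]
  · intro S U
    simp only [mem_powersetCard, mem_filter]
    grind

lemma wedge_comp_perm (n : ℕ) (x : Fin n → V) (σ : Equiv.Perm (Fin n)) :
    wedge n (x ∘ σ) = wedge n x := by
  change exteriorPower.ιMulti F2 n (x ∘ σ) = exteriorPower.ιMulti F2 n x
  rw [AlternatingMap.map_perm]
  rcases Int.units_eq_one_or (Equiv.Perm.sign σ) with h | h <;> rw [h]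
  · exact one_smul _ _
  · rw [Units.neg_smul, one_smul, ← neg_one_smul F2, show (-1 : F2) = 1 from rfl, one_smul]

lemma wedge_comp_eq_of_range_eq {α : Type*} {n : ℕ} (y : α → V) {f g : Fin n → α}
    (hf : Function.Injective f) (hg : Function.Injective g) (hfg : Set.range f = Set.range g) :
    wedge n (y ∘ f) = wedge n (y ∘ g) := by
  obtain ⟨π, rfl⟩ := exists_perm_eq_comp_of_range_eq hf hg hfg
  exact wedge_comp_perm n (y ∘ g) π

lemma wedge_append_comp_eq_of_range_eq {α : Type*} {m n a : ℕ} (h : a = m + n) (x : Fin m → V)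
    (y : α → V) {f g : Fin n → α} (hf : Function.Injective f) (hg : Function.Injective g)
    (hfg : Set.range f = Set.range g) :
    wedge a (Fin.append x (y ∘ f) ∘ Fin.cast h) = wedge a (Fin.append x (y ∘ g) ∘ Fin.cast h) := by
  obtain ⟨π, rfl⟩ := exists_perm_eq_comp_of_range_eq hf hg hfg
  obtain ⟨σ, hσ⟩ := Fin.exists_append_comp_perm x (y ∘ g) π
  subst h
  exact (congrArg (wedge _) hσ).trans (wedge_comp_perm _ _ σ)

lemma ext_wedge_tmul {W : Type*} [AddCommGroup W] [Module F2 W] {i j : ℕ}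
    {f g : (⋀[F2]^i V) ⊗[F2] (⋀[F2]^j V) →ₗ[F2] W}
    (h : ∀ x y, f (wedge i x ⊗ₜ wedge j y) = g (wedge i x ⊗ₜ wedge j y)) : f = g := by
  refine TensorProduct.ext (LinearMap.ext_on_range (exteriorPower.ιMulti_span F2 i V) fun x => ?_)
  exact LinearMap.ext_on_range (exteriorPower.ιMulti_span F2 j V) fun y => h x y

/-- The term of `θ_{i,j,t}(x ⊗ y)` indexed by `S`, extended by `0` to the sets `S` without
`t` elements so that sums of such terms can be reindexed freely. -/
def thetaSummand (i j t : ℕ) {a b : ℕ} (ha : i + t = a) (hb : j - t = b) (x : Fin i → V)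
    (y : Fin j → V) (S : Finset (Fin j)) : (⋀[F2]^a V) ⊗[F2] (⋀[F2]^b V) :=
  if hS : S.card = t then
    wedge a (Fin.append x (y ∘ S.orderEmbOfFin hS) ∘ Fin.cast ha.symm) ⊗ₜ
      wedge b ((y ∘ Sᶜ.orderEmbOfFin (by simp [card_compl, hS])) ∘ Fin.cast hb.symm)
  else 0

lemma thetaSummand_of_card {i j t a b : ℕ} {ha : i + t = a} {hb : j - t = b} (x : Fin i → V)
    (y : Fin j → V) {S : Finset (Fin j)} (hS : S.card = t) :
    thetaSummand i j t ha hb x y S =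
      wedge a (Fin.append x (y ∘ S.orderEmbOfFin hS) ∘ Fin.cast ha.symm) ⊗ₜ
        wedge b ((y ∘ Sᶜ.orderEmbOfFin (by simp [card_compl, hS])) ∘ Fin.cast hb.symm) :=
  dif_pos hS

lemma IsTheta.apply_wedge_tmul {i j t a b : ℕ} {ha : i + t = a} {hb : j - t = b}
    {θ : (⋀[F2]^i V) ⊗[F2] (⋀[F2]^j V) →ₗ[F2] (⋀[F2]^a V) ⊗[F2] (⋀[F2]^b V)}
    (hθ : IsTheta i j t ha hb θ) (x : Fin i → V) (y : Fin j → V) :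
    θ (wedge i x ⊗ₜ wedge j y) = ∑ S ∈ powersetCard t univ, thetaSummand i j t ha hb x y S := by
  rw [hθ, ← sum_attach _ (thetaSummand i j t ha hb x y)]
  refine sum_congr rfl fun S _ => ?_
  exact (thetaSummand_of_card x y (mem_powersetCard.1 S.2).2).symm

lemma thetaSummand_append_eq_union {i j k l : ℕ} (h₁ : i + (k + l) = i + k + l)
    (h₂ : j - (k + l) = j - k - l) (x : Fin i → V) (y : Fin j → V) {S : Finset (Fin j)}
    (hS : S.card = k) {e : Fin (j - k) ↪ Fin j} (he : Set.range e = ↑Sᶜ)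
    {T : Finset (Fin (j - k))} (hT : T.card = l) :
    thetaSummand (i + k) (j - k) l rfl rfl (Fin.append x (y ∘ S.orderEmbOfFin hS)) (y ∘ e) T =
      thetaSummand i j (k + l) h₁ h₂ x y (S ∪ T.map e) := by
  have he_notMem : ∀ w, e w ∉ S := fun w =>
    mem_compl.1 (mem_coe.1 (he ▸ Set.mem_range_self w))
  have hdisj : Disjoint S (T.map e) := disjoint_left.2 fun v hvS hvT => by
    obtain ⟨w, -, rfl⟩ := mem_map.1 hvT
    exact he_notMem w hvS
  have hU : (S ∪ T.map e).card = k + l := by rw [card_union_of_disjoint hdisj, hS, card_map, hT]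
  rw [thetaSummand_of_card _ _ hT, thetaSummand_of_card _ _ hU]
  congr 1
  · set g := Fin.append (S.orderEmbOfFin hS) (e ∘ T.orderEmbOfFin hT)
    have hinj : Function.Injective g :=
      Fin.append_injective_iff.2 ⟨(S.orderEmbOfFin hS).injective,
        e.injective.comp (T.orderEmbOfFin hT).injective,
        fun p q hpq => he_notMem _ (hpq ▸ orderEmbOfFin_mem S hS p)⟩
    have hrange : Set.range g = Set.range ((S ∪ T.map e).orderEmbOfFin hU) := by
      rw [Fin.range_append, Set.range_comp]
      simp
    rw [Fin.append_assoc, show Fin.append (y ∘ S.orderEmbOfFin hS) ((y ∘ e) ∘ T.orderEmbOfFin hT)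
      = y ∘ g from (Fin.comp_append _ _ _).symm]
    exact wedge_append_comp_eq_of_range_eq h₁.symm x y hinj (orderEmbOfFin _ hU).injective hrange
  · have hTc : Tᶜ.card = j - k - l := by rw [card_compl, Fintype.card_fin, hT]
    have hUc : (S ∪ T.map e)ᶜ.card = j - (k + l) := by rw [card_compl, Fintype.card_fin, hU]
    have hrange : Set.range (e ∘ Tᶜ.orderEmbOfFin hTc) =
        Set.range ((S ∪ T.map e)ᶜ.orderEmbOfFin hUc ∘ Fin.cast h₂.symm) := by
      have hcast : Function.Surjective (Fin.cast h₂.symm) := (finCongr h₂.symm).surjective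
      rw [hcast.range_comp, Set.range_comp]
      simp [Set.image_compl_eq_range_sdiff_image e.injective, he, Set.sdiff_eq]
    exact wedge_comp_eq_of_range_eq y (e.injective.comp (orderEmbOfFin _ _).injective)
      (((S ∪ T.map e)ᶜ.orderEmbOfFin _).injective.comp (Fin.cast_injective _)) hrange

lemma IsTheta.apply_thetaSummand {i j k l : ℕ} (h₁ : i + (k + l) = i + k + l)
    (h₂ : j - (k + l) = j - k - l)
    {θ : (⋀[F2]^(i + k) V) ⊗[F2] (⋀[F2]^(j - k) V) →ₗ[F2]
      (⋀[F2]^(i + k + l) V) ⊗[F2] (⋀[F2]^(j - k - l) V)}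
    (hθ : IsTheta (i + k) (j - k) l rfl rfl θ) (x : Fin i → V) (y : Fin j → V)
    {S : Finset (Fin j)} (hS : S.card = k) :
    θ (thetaSummand i j k rfl rfl x y S) =
      ∑ W ∈ powersetCard l Sᶜ, thetaSummand i j (k + l) h₁ h₂ x y (S ∪ W) := by
  have hSc : Sᶜ.card = j - k := by rw [card_compl, Fintype.card_fin, hS]
  rw [thetaSummand_of_card x y hS, hθ.apply_wedge_tmul,
    ← sum_powersetCard_map_orderEmbOfFin Sᶜ hSc l]
  refine sum_congr rfl fun T hT => ?_
  exact thetaSummand_append_eq_union h₁ h₂ x y hS (range_orderEmbOfFin Sᶜ hSc)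
    (mem_powersetCard_univ.1 hT)

/-- `θ_{i+k, j−k, l} ∘ θ_{i,j,k} = C(k+l, k) · θ_{i,j,k+l}` (mod 2). -/
theorem theta_comp_theta {V : Type*} [AddCommGroup V] [Module F2 V]
    (i j k l : ℕ)
    (θ₁ : (⋀[F2]^i V) ⊗[F2] (⋀[F2]^j V) →ₗ[F2] (⋀[F2]^(i + k) V) ⊗[F2] (⋀[F2]^(j - k) V))
    (hθ₁ : IsTheta i j k rfl rfl θ₁)
    (θ₂ : (⋀[F2]^(i + k) V) ⊗[F2] (⋀[F2]^(j - k) V) →ₗ[F2]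
      (⋀[F2]^(i + k + l) V) ⊗[F2] (⋀[F2]^(j - k - l) V))
    (hθ₂ : IsTheta (i + k) (j - k) l rfl rfl θ₂)
    (θ₃ : (⋀[F2]^i V) ⊗[F2] (⋀[F2]^j V) →ₗ[F2]
      (⋀[F2]^(i + k + l) V) ⊗[F2] (⋀[F2]^(j - k - l) V))
    (hθ₃ : IsTheta i j (k + l) (by omega) (by omega) θ₃) :
    θ₂ ∘ₗ θ₁ = (((k + l).choose k : F2)) • θ₃ := by
  have h₁ : i + (k + l) = i + k + l := (Nat.add_assoc i k l).symm
  have h₂ : j - (k + l) = j - k - l := (Nat.sub_sub j k l).symm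
  refine ext_wedge_tmul fun x y => ?_
  rw [LinearMap.comp_apply, LinearMap.smul_apply, hθ₁.apply_wedge_tmul, map_sum,
    hθ₃.apply_wedge_tmul, Nat.cast_smul_eq_nsmul,
    ← sum_powersetCard_sum_powersetCard_sdiff_union]
  refine sum_congr rfl fun S hS => ?_
  rw [hθ₂.apply_thetaSummand h₁ h₂ x y (mem_powersetCard_univ.1 hS), compl_eq_univ_sdiff]

end
end

section
/- Let L be an associative unital 𝔽₂-algebra, k ≥ 1, and u₀, u₁, …, u_k elements of L such that uᵢuⱼ = uⱼuᵢ whenever |i − j| ≥ 2. Set v = u_k u_{k−1} ⋯ u₁, and let I be the two-sided ideal of L generated by the elements u_{i−1}u_i u_{i−1} + u_i u_{i−1} u_i for 1 ≤ i ≤ k. Then v u₀ v ∈ I + L·u₀, i.e. there exist x ∈ I and w ∈ L with v u₀ v = x + w u₀. -/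
/-!
Modulo `I` the braid relations `uᵢ₋₁uᵢuᵢ₋₁ = uᵢuᵢ₋₁uᵢ` hold exactly (in characteristic 2 the
generators are differences), so one may compute in the quotient ring, using only its monoid
structure. For `Pₘ = uₘ ⋯ u₁` the factor `uₘ₊₁` commutes past `Pₘ₋₁u₀`, and one braid move gives
`Pₘ₊₁ u₀ Pₘ₊₁ = uₘ uₘ₊₁ (Pₘ u₀ Pₘ)`; starting from `P₀ u₀ P₀ = u₀`, induction makes `Pₖ u₀ Pₖ` a
left multiple of `u₀`.
-/

section DescProd

variable {M : Type*} [Monoid M] (u : ℕ → M)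

/-- `descProd u n = u n * u (n - 1) * ⋯ * u 1`. -/
def descProd (n : ℕ) : M := ((List.range n).map (fun i => u (n - i))).prod

@[simp]
lemma descProd_zero : descProd u 0 = 1 := rfl

lemma descProd_succ (n : ℕ) : descProd u (n + 1) = u (n + 1) * descProd u n := by
  simp only [descProd, List.range_succ_eq_map, List.map_cons, List.prod_cons, List.map_map,
    Nat.sub_zero]
  congr 2
  exact List.map_congr_left fun i _ => by simp

lemma map_descProd {N F : Type*} [Monoid N] [FunLike F M N] [MonoidHomClass F M N] (f : F)
    (n : ℕ) : f (descProd u n) = descProd (fun i => f (u i)) n := by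
  induction n with
  | zero => simp
  | succ n ih => rw [descProd_succ, descProd_succ, map_mul, ih]

variable {u}

lemma Commute.descProd_right {a : M} {n : ℕ} (h : ∀ j, 1 ≤ j → j ≤ n → Commute a (u j)) :
    Commute a (descProd u n) := by
  induction n with
  | zero => exact Commute.one_right a
  | succ n ih =>
    rw [descProd_succ]
    exact (h (n + 1) (by omega) le_rfl).mul_right (ih fun j hj hjn => h j hj (by omega))

lemma descProd_succ_mul_mul_descProd_succ {m : ℕ}
    (hbraid : u m * u (m + 1) * u m = u (m + 1) * u m * u (m + 1))
    (hfar : ∀ j < m, Commute (u (m + 1)) (u j)) :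
    descProd u (m + 1) * u 0 * descProd u (m + 1) =
      u m * u (m + 1) * (descProd u m * u 0 * descProd u m) := by
  cases m with
  | zero => simpa [descProd_succ, mul_assoc] using hbraid.symm
  | succ n =>
    set P := descProd u n
    have hc : Commute (u (n + 2)) (P * u 0) :=
      (Commute.descProd_right fun j _ hj => hfar j (by omega)).mul_right (hfar 0 (by omega))
    simp only [descProd_succ]
    calc u (n + 2) * (u (n + 1) * P) * u 0 * (u (n + 2) * (u (n + 1) * P))
        = u (n + 2) * u (n + 1) * (P * u 0 * u (n + 2)) * (u (n + 1) * P) := by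
          simp only [mul_assoc]
      _ = u (n + 2) * u (n + 1) * u (n + 2) * (P * u 0 * (u (n + 1) * P)) := by
          rw [← hc.eq]; simp only [mul_assoc]
      _ = u (n + 1) * u (n + 2) * (u (n + 1) * P * u 0 * (u (n + 1) * P)) := by
          rw [← hbraid]; simp only [mul_assoc]

theorem exists_descProd_mul_mul_descProd_eq_mul {k : ℕ}
    (hbraid : ∀ i, i + 1 ≤ k → u i * u (i + 1) * u i = u (i + 1) * u i * u (i + 1))
    (hfar : ∀ i j, j + 2 ≤ i → i ≤ k → Commute (u i) (u j)) :
    ∃ w, descProd u k * u 0 * descProd u k = w * u 0 := by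
  suffices ∀ m ≤ k, ∃ w, descProd u m * u 0 * descProd u m = w * u 0 from this k le_rfl
  intro m hm
  induction m with
  | zero => exact ⟨1, by simp⟩
  | succ m ih =>
    obtain ⟨w, hw⟩ := ih (by omega)
    refine ⟨u m * u (m + 1) * w, ?_⟩
    rw [descProd_succ_mul_mul_descProd_succ (hbraid m hm) fun j hj => hfar _ _ (by omega) hm, hw]
    simp only [mul_assoc]

end DescProd

lemma neg_eq_self_of_one_add_one_eq_zero {R : Type*} [Ring R] (hchar : (1 : R) + 1 = 0)
    (a : R) : -a = a := by
  rw [neg_eq_iff_add_eq_zero, ← two_mul, ← one_add_one_eq_two, hchar, zero_mul]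

theorem braid_product_mem_ideal_add_left_multiples_general
    {L : Type*} [Ring L] (hchar : (1 : L) + 1 = 0)
    (k : ℕ) (u : ℕ → L)
    (hcomm : ∀ i j, i ≤ k → j ≤ k → 2 ≤ max i j - min i j → u i * u j = u j * u i) :
    ∃ (x w : L),
      x ∈ TwoSidedIdeal.span
        {y : L | ∃ i, 1 ≤ i ∧ i ≤ k ∧ y = u (i - 1) * u i * u (i - 1) + u i * u (i - 1) * u i} ∧
      ((List.range k).map (fun i => u (k - i))).prod * u 0 *
          ((List.range k).map (fun i => u (k - i))).prod = x + w * u 0 := by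
  set I := TwoSidedIdeal.span
    {y : L | ∃ i, 1 ≤ i ∧ i ≤ k ∧ y = u (i - 1) * u i * u (i - 1) + u i * u (i - 1) * u i}
  let π := I.ringCon.mk'
  have hbraid : ∀ i, i + 1 ≤ k →
      π (u i) * π (u (i + 1)) * π (u i) = π (u (i + 1)) * π (u i) * π (u (i + 1)) := by
    intro i hi
    simp only [← map_mul]
    refine I.ringCon.eq.mpr ((I.rel_iff _ _).mpr ?_)
    rw [sub_eq_add_neg, neg_eq_self_of_one_add_one_eq_zero hchar]
    exact TwoSidedIdeal.subset_span ⟨i + 1, by omega, hi, rfl⟩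
  have hfar : ∀ i j, j + 2 ≤ i → i ≤ k → Commute (π (u i)) (π (u j)) := fun i j hji hik =>
    Commute.map (hcomm i j hik (by omega) (by omega)) π
  obtain ⟨w', hw'⟩ := exists_descProd_mul_mul_descProd_eq_mul hbraid hfar
  obtain ⟨w, rfl⟩ := I.ringCon.mk'_surjective w'
  have hx : descProd u k * u 0 * descProd u k - w * u 0 ∈ I := by
    rw [← I.rel_iff, ← I.ringCon.eq]
    change π _ = π _
    simpa only [map_mul, map_descProd] using hw'
  exact ⟨_, w, hx, (sub_add_cancel _ _).symm⟩

/-- Let `L` be an associative unital `𝔽₂`-algebra (a ring in which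
`1 + 1 = 0`), `k ≥ 1`, and `u₀, …, u_k` elements of `L` such that `uᵢ` and `uⱼ` commute
whenever `|i − j| ≥ 2`.  Let `v = u_k u_{k−1} ⋯ u₁` and let `I` be the two-sided ideal
generated by the elements `u_{i−1} u_i u_{i−1} + u_i u_{i−1} u_i` for `1 ≤ i ≤ k`.
Then `v u₀ v ∈ I + L u₀`. -/
theorem braid_product_mem_ideal_add_left_multiples
    {L : Type*} [Ring L] (hchar : (1 : L) + 1 = 0)
    (k : ℕ) (hk : 1 ≤ k) (u : ℕ → L)
    (hcomm : ∀ i j, i ≤ k → j ≤ k → 2 ≤ max i j - min i j → u i * u j = u j * u i) :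
    ∃ (x w : L),
      x ∈ TwoSidedIdeal.span
        {y : L | ∃ i, 1 ≤ i ∧ i ≤ k ∧ y = u (i - 1) * u i * u (i - 1) + u i * u (i - 1) * u i} ∧
      ((List.range k).map (fun i => u (k - i))).prod * u 0 *
          ((List.range k).map (fun i => u (k - i))).prod = x + w * u 0 :=
  braid_product_mem_ideal_add_left_multiples_general hchar k u hcomm
end

section
/- Let X be an object of 𝓐, Y a subobject of X, and π : Φ(X) → B a morphism of 𝓑 such that: (1) S′ is a composition factor of im π; (2) S′ is not a composition factor of Φ(Y); (3) X/Y ≅ S. Then S is Φ-detected by S′ in X relative to π. -/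
open CategoryTheory CategoryTheory.Limits

noncomputable section

universe v v' u u'

variable {A : Type u} [Category.{v} A] [Abelian A]

/-- A simple object `S` is a *composition factor* of `X` if it is isomorphic to a
subquotient `Q/P` for some subobjects `P ≤ Q` of `X`. -/
def IsCompFactor (S X : A) : Prop :=
  ∃ (P Q : Subobject X) (h : P ≤ Q), Nonempty (cokernel (Subobject.ofLE P Q h) ≅ S)

/-- An object has *finite length* if it admits a finite composition series, equivalently
it is both a noetherian and an artinian object. -/
def FiniteLen (X : A) : Prop := IsNoetherianObject X ∧ IsArtinianObject X

/-- The diagram of finite-length subobjects of `X`. -/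
def flDiagram (X : A) : {P : Subobject X // FiniteLen (P : A)} ⥤ A :=
  (Monotone.functor (f := fun P : {P : Subobject X // FiniteLen (P : A)} => P.1)
    fun _ _ h => h) ⋙ Subobject.underlying

/-- The canonical cocone from the diagram of finite-length subobjects of `X` to `X`. -/
def flCocone (X : A) : Cocone (flDiagram X) where
  pt := X
  ι :=
    { app := fun P => (P.1).arrow
      naturality := fun P Q f => by
        dsimp [flDiagram, Monotone.functor]
        rw [Category.comp_id]
        exact Subobject.ofLE_arrow (leOfHom f) }

/-- `X` is *locally finite* if it is the filtered union (supremum) of its subobjects of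
finite length, i.e. the canonical cocone on the diagram of finite-length subobjects of
`X` is a colimit cocone. -/
def LocFinite (X : A) : Prop := Nonempty (IsColimit (flCocone X))


section Aux

variable {C : Type*} [Category C] [Abelian C]

lemma isCompFactor_of_mono_epi {S X V : C} (i : V ⟶ X) [Mono i] (p : V ⟶ S) [Epi p] :
    IsCompFactor S X := by
  refine ⟨Subobject.mk (kernel.ι p ≫ i), Subobject.mk i,
    Subobject.mk_le_mk_of_comm (kernel.ι p) rfl, ?_⟩
  exact ⟨(cokernelIsoOfEq (Subobject.ofLE_mk_le_mk_of_comm (kernel.ι p) rfl)).trans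
    ((cokernelEpiComp _ _).trans ((cokernelCompIsIso _ _).trans
    (IsColimit.coconePointUniqueUpToIso (colimit.isColimit _)
      (Abelian.epiIsCokernelOfKernel _ (kernelIsKernel p)))))⟩

lemma isCompFactor_iff' {S X : C} :
    IsCompFactor S X ↔ ∃ (V : C) (i : V ⟶ X) (p : V ⟶ S), Mono i ∧ Epi p := by
  constructor
  · rintro ⟨P, Q, h, ⟨e⟩⟩
    exact ⟨(Q : C), Q.arrow, cokernel.π (Subobject.ofLE P Q h) ≫ e.hom,
      inferInstance, epi_comp _ _⟩
  · rintro ⟨V, i, p, hi, hp⟩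
    exact isCompFactor_of_mono_epi i p

lemma IsCompFactor.of_mono {S W Z : C} (h : IsCompFactor S W) (i : W ⟶ Z) [Mono i] :
    IsCompFactor S Z := by
  obtain ⟨V, j, p, hj, hp⟩ := isCompFactor_iff'.1 h
  exact isCompFactor_of_mono_epi (j ≫ i) p

lemma IsCompFactor.of_epi {S W Z : C} (h : IsCompFactor S W) (e : Z ⟶ W) [Epi e] :
    IsCompFactor S Z := by
  obtain ⟨V, j, p, hj, hp⟩ := isCompFactor_iff'.1 h
  exact isCompFactor_of_mono_epi (pullback.fst e j) (pullback.snd e j ≫ p)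

end Aux

variable {B : Type u'} [Category.{v'} B] [Abelian B]

/-- `S` is `Φ`-detected by `S′` in `X` relative to `π : Φ(X) ⟶ T` if `S′` is a
composition factor of `im π` and, for every subobject `P` of `X` such that `S′` is a
composition factor of `π(im Φ(P ↪ X))`, `S` is a composition factor of `P`. -/
def Detects (Φ : A ⥤ B) (S : A) (S' : B) {X : A} {T : B} (π : Φ.obj X ⟶ T) : Prop :=
  IsCompFactor S' (image π) ∧
    ∀ P : Subobject X,
      IsCompFactor S' (image (Φ.map P.arrow ≫ π)) → IsCompFactor S ((P : A))

/-- If `Y` is a subobject of `X` with `X/Y ≅ S`, `S′` is a composition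
factor of `im π` but not of `Φ Y`, then `S` is `Φ`-detected by `S′` in `X` relative to
`π`. -/
theorem detection_of_simple_quotient
    [HasFilteredColimits A] [AB5 A] [HasFilteredColimits B] [AB5 B]
    (Φ : A ⥤ B) [PreservesColimits Φ]
    (S : A) (hS : Simple S) (S' : B) (hS' : Simple S')
    (X : A) (Y : Subobject X) (T : B) (π : Φ.obj X ⟶ T)
    (h₁ : IsCompFactor S' (image π))
    (h₂ : ¬ IsCompFactor S' (Φ.obj ((Y : A))))
    (h₃ : Nonempty (cokernel Y.arrow ≅ S)) :
    Detects Φ S S' π := by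
  obtain ⟨eS⟩ := h₃
  haveI := hS; haveI := hS'
  refine ⟨h₁, fun P hP => ?_⟩
  by_cases hg : P.arrow ≫ cokernel.π Y.arrow = 0
  · -- then `P ≤ Y`, contradicting `h₂`
    exfalso
    apply h₂
    have hl : Abelian.monoLift Y.arrow P.arrow hg ≫ Y.arrow = P.arrow :=
      Abelian.monoLift_comp _ _ _
    set l' : Φ.obj (P : A) ⟶ Φ.obj (Y : A) := Φ.map (Abelian.monoLift Y.arrow P.arrow hg)
    set q : Φ.obj ((Y : A)) ⟶ T := Φ.map Y.arrow ≫ π with hq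
    have hfac : Φ.map P.arrow ≫ π = l' ≫ q := by
      rw [hq, ← Category.assoc, ← Φ.map_comp, hl]
    have sq : CommSq (factorThruImage (Φ.map P.arrow ≫ π)) (factorThruImage l')
        (image.ι (Φ.map P.arrow ≫ π)) (image.ι l' ≫ q) :=
      ⟨by rw [image.fac, hfac]; conv_rhs => rw [← Category.assoc, image.fac]⟩
    have hrepi : Epi sq.lift := by
      have : Epi (factorThruImage l' ≫ sq.lift) := by
        rw [sq.fac_left]; infer_instance
      exact epi_of_epi (factorThruImage l') sq.lift
    exact (hP.of_epi sq.lift).of_mono (image.ι l')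
  · -- the composite `P ⟶ X ⟶ X/Y ≅ S` is nonzero, hence epi since `S` is simple
    set g' : (P : A) ⟶ S := (P.arrow ≫ cokernel.π Y.arrow) ≫ eS.hom with hg'def
    have hg' : g' ≠ 0 := by
      intro h0
      apply hg
      have := h0
      rw [hg'def] at this
      rw [← cancel_mono eS.hom, this, zero_comp]
    have hι : image.ι g' ≠ 0 := by
      intro h0
      exact hg' (by rw [← image.fac g', h0, comp_zero])
    haveI : IsIso (image.ι g') := isIso_of_mono_of_nonzero hι
    haveI : Epi g' := by
      rw [show g' = factorThruImage g' ≫ image.ι g' from (image.fac g').symm]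
      exact epi_comp _ _
    exact isCompFactor_of_mono_epi (𝟙 (P : A)) g'


end
end
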